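/- Let (X, M, *) be a compact fuzzy metric space with the Łukasiewicz t-norm. If a sequence (μᵢ) in P(X) converges to μ ∈ P(X) in the topology induced by the fuzzy Prokhorov metric M̂, then (μᵢ) converges weakly* to μ, i.e., limsup_{i→∞} μᵢ(C) ≤ μ(C) for every closed set C ⊆ X. -/

import Mathlib

/-!
Every closed set `C` is the intersection of its expansions `C^{r,r}` (`r > 0`), so
`μ(C^{r,r}) → μ(C)` as `r → 0⁺`. Once `M̂(μᵢ, μ, r) > 1 - r`, some admissible radius below `r`
gives `μᵢ(C) ≤ μ(C^{r,r}) + r`, whence `limsup μᵢ(C) ≤ μ(C)`. Compactness enters only to make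
the infimum defining `M̂` range over a nonempty set: `M(·,·,t)` is lower semicontinuous on the
compact space `X × X`, hence bounded below by some `c > 0`, and then every radius `r > 1 - c`
is admissible.
-/

open Set MeasureTheory Filter Topology

noncomputable section

/-- The Łukasiewicz t-norm. -/
def luk (a b : ℝ) : ℝ := max (a + b - 1) 0

/-- A continuous t-norm on `[0,1]`. -/
structure IsContinuousTNorm (star : ℝ → ℝ → ℝ) : Prop where
  maps_to : ∀ a b, a ∈ Icc (0:ℝ) 1 → b ∈ Icc (0:ℝ) 1 → star a b ∈ Icc (0:ℝ) 1
  comm : ∀ a b, a ∈ Icc (0:ℝ) 1 → b ∈ Icc (0:ℝ) 1 → star a b = star b a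
  assoc : ∀ a b c, a ∈ Icc (0:ℝ) 1 → b ∈ Icc (0:ℝ) 1 → c ∈ Icc (0:ℝ) 1 →
    star (star a b) c = star a (star b c)
  continuous : ContinuousOn (fun p : ℝ × ℝ => star p.1 p.2) (Icc 0 1 ×ˢ Icc 0 1)
  one_right : ∀ a, a ∈ Icc (0:ℝ) 1 → star a 1 = a
  mono : ∀ a b c d, a ∈ Icc (0:ℝ) 1 → b ∈ Icc (0:ℝ) 1 → c ∈ Icc (0:ℝ) 1 →
    d ∈ Icc (0:ℝ) 1 → a ≤ c → b ≤ d → star a b ≤ star c d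

/-- A fuzzy metric (George–Veeramani) with respect to a t-norm `star`. -/
structure IsFuzzyMetric {X : Type*} (M : X → X → ℝ → ℝ) (star : ℝ → ℝ → ℝ) : Prop where
  pos : ∀ x y t, 0 < t → 0 < M x y t
  le_one : ∀ x y t, 0 < t → M x y t ≤ 1
  eq_one_iff : ∀ x y t, 0 < t → (M x y t = 1 ↔ x = y)
  symm : ∀ x y t, 0 < t → M x y t = M y x t
  triangle : ∀ x y z t s, 0 < t → 0 < s → star (M x y t) (M y z s) ≤ M x z (t + s)
  continuousOn : ∀ x y, ContinuousOn (fun t => M x y t) (Ioi (0:ℝ))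

/-- The open ball `B(x,r,t)` in a fuzzy metric space. -/
def fmBall {X : Type*} (M : X → X → ℝ → ℝ) (x : X) (r t : ℝ) : Set X :=
  {y | 1 - r < M x y t}

/-- The `r,t`-expansion `A^{r,t}` of a set `A`. -/
def fmExpand {X : Type*} (M : X → X → ℝ → ℝ) (A : Set X) (r t : ℝ) : Set X :=
  ⋃ x ∈ A, fmBall M x r t

/-- The fuzzy metric `M` generates the given topology on `X`. -/
def GeneratesTopology {X : Type*} [TopologicalSpace X] (M : X → X → ℝ → ℝ) : Prop :=
  TopologicalSpace.IsTopologicalBasis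
    {s : Set X | ∃ x r t, 0 < r ∧ r < 1 ∧ 0 < t ∧ s = fmBall M x r t}

/-- The set of admissible radii in the definition of the fuzzy Prokhorov metric. -/
def prokSet {X : Type*} [MeasurableSpace X] (M : X → X → ℝ → ℝ)
    (μ ν : Measure X) (t : ℝ) : Set ℝ :=
  {r | 0 < r ∧ r < 1 ∧ ∀ A : Set X, MeasurableSet A →
    μ A ≤ ν (fmExpand M A r t) + ENNReal.ofReal r ∧
    ν A ≤ μ (fmExpand M A r t) + ENNReal.ofReal r}

/-- The fuzzy Prokhorov function `M̂` on measures. -/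
def fuzzyProkhorov {X : Type*} [MeasurableSpace X] (M : X → X → ℝ → ℝ)
    (μ ν : Measure X) (t : ℝ) : ℝ :=
  1 - sInf (prokSet M μ ν t)

section FuzzyMetric

variable {X : Type*} {M : X → X → ℝ → ℝ}

lemma fmBall_mono_radius {x : X} {r r' t : ℝ} (hr : r ≤ r') :
    fmBall M x r t ⊆ fmBall M x r' t :=
  fun _ hy => (sub_le_sub_left hr 1).trans_lt hy

lemma fmExpand_mono {A : Set X} {r r' t t' : ℝ}
    (h : ∀ x, fmBall M x r t ⊆ fmBall M x r' t') : fmExpand M A r t ⊆ fmExpand M A r' t' :=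
  biUnion_mono subset_rfl fun x _ => h x

namespace IsFuzzyMetric

lemma apply_self_eq_one (hM : IsFuzzyMetric M luk) (x : X) {t : ℝ} (ht : 0 < t) :
    M x x t = 1 :=
  (hM.eq_one_iff x x t ht).mpr rfl

lemma add_sub_one_le (hM : IsFuzzyMetric M luk) (x y z : X) {t s : ℝ} (ht : 0 < t)
    (hs : 0 < s) : M x y t + M y z s - 1 ≤ M x z (t + s) :=
  (le_max_left _ _).trans (hM.triangle x y z t s ht hs)

lemma mono (hM : IsFuzzyMetric M luk) (x y : X) {t s : ℝ} (ht : 0 < t) (hts : t ≤ s) :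
    M x y t ≤ M x y s := by
  rcases hts.eq_or_lt with rfl | hts
  · rfl
  have h := hM.add_sub_one_le x y y ht (sub_pos.mpr hts)
  rw [hM.apply_self_eq_one y (sub_pos.mpr hts), add_sub_cancel] at h
  linarith

lemma mem_fmBall_self (hM : IsFuzzyMetric M luk) (x : X) {r t : ℝ} (hr : 0 < r)
    (ht : 0 < t) : x ∈ fmBall M x r t := by
  show 1 - r < M x x t
  rw [hM.apply_self_eq_one x ht]
  linarith

lemma fmBall_mono (hM : IsFuzzyMetric M luk) {x : X} {r r' t t' : ℝ} (ht : 0 < t)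
    (hr : r ≤ r') (htt : t ≤ t') : fmBall M x r t ⊆ fmBall M x r' t' :=
  fun y hy =>
    fmBall_mono_radius hr ((show 1 - r < M x y t from hy).trans_le (hM.mono x y ht htt))

lemma subset_fmExpand (hM : IsFuzzyMetric M luk) (A : Set X) {r t : ℝ} (hr : 0 < r)
    (ht : 0 < t) : A ⊆ fmExpand M A r t :=
  fun x hx => mem_biUnion hx (hM.mem_fmBall_self x hr ht)

lemma exists_forall_fmBall_lt (hM : IsFuzzyMetric M luk) {x₀ y₀ : X} {t c : ℝ} (ht : 0 < t)
    (hc : c < M x₀ y₀ t) :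
    ∃ δ s, 0 < δ ∧ 0 < s ∧ ∀ x ∈ fmBall M x₀ δ s, ∀ y ∈ fmBall M y₀ δ s, c < M x y t := by
  set δ := (M x₀ y₀ t - c) / 3 with hδ_def
  have hδ : 0 < δ := by positivity
  -- Continuity in `t` trades a third of the margin for room `t - u` to run the triangle
  -- inequality twice.
  have hcont : Tendsto (M x₀ y₀) (𝓝[<] t) (𝓝 (M x₀ y₀ t)) :=
    (hM.continuousOn x₀ y₀ t ht).mono_of_mem_nhdsWithin
      (mem_nhdsWithin_of_mem_nhds (Ioi_mem_nhds ht))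
  obtain ⟨u, hu, hu0, hut⟩ :=
    ((hcont.eventually_const_lt (sub_lt_self _ hδ)).and (Ioo_mem_nhdsLT ht)).exists
  refine ⟨δ, (t - u) / 2, hδ, by linarith, fun x hx y hy => ?_⟩
  have h₁ := hM.add_sub_one_le x x₀ y (t := (t - u) / 2) (s := u + (t - u) / 2)
    (by linarith) (by linarith)
  have h₂ := hM.add_sub_one_le x₀ y₀ y hu0 (by linarith : 0 < (t - u) / 2)
  rw [hM.symm x x₀ _ (by linarith), show (t - u) / 2 + (u + (t - u) / 2) = t by ring] at h₁
  have hx' : 1 - δ < M x₀ x ((t - u) / 2) := hx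
  have hy' : 1 - δ < M y₀ y ((t - u) / 2) := hy
  linarith

variable [TopologicalSpace X]

lemma isOpen_fmBall (hM : IsFuzzyMetric M luk) (hgen : GeneratesTopology M) (x : X)
    {r t : ℝ} (hr : 0 < r) (ht : 0 < t) : IsOpen (fmBall M x r t) := by
  rcases lt_or_ge r 1 with hr1 | hr1
  · exact hgen.isOpen ⟨x, r, t, hr, hr1, ht, rfl⟩
  · have : fmBall M x r t = univ :=
      eq_univ_of_forall fun y => show 1 - r < M x y t by linarith [hM.pos x y t ht]
    exact this ▸ isOpen_univ

lemma fmBall_mem_nhds (hM : IsFuzzyMetric M luk) (hgen : GeneratesTopology M) (x : X)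
    {r t : ℝ} (hr : 0 < r) (ht : 0 < t) : fmBall M x r t ∈ 𝓝 x :=
  (hM.isOpen_fmBall hgen x hr ht).mem_nhds (hM.mem_fmBall_self x hr ht)

lemma hasBasis_nhds_fmBall (hM : IsFuzzyMetric M luk) (hgen : GeneratesTopology M) (y : X) :
    (𝓝 y).HasBasis (fun r : ℝ => 0 < r) (fun r => fmBall M y r r) := by
  refine ⟨fun U => ⟨fun hU => ?_, fun ⟨r, hr, hrU⟩ => mem_of_superset
    (hM.fmBall_mem_nhds hgen y hr hr) hrU⟩⟩
  obtain ⟨-, ⟨x, ρ, τ, -, -, hτ, rfl⟩, hyB, hBU⟩ := hgen.mem_nhds_iff.mp hU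
  obtain ⟨δ, s, hδ, hs, hlt⟩ := hM.exists_forall_fmBall_lt hτ hyB
  refine ⟨min δ s, lt_min hδ hs, fun z hz => hBU (hlt x (hM.mem_fmBall_self x hδ hs) z ?_)⟩
  exact hM.fmBall_mono (lt_min hδ hs) (min_le_left _ _) (min_le_right _ _) hz

lemma lowerSemicontinuous (hM : IsFuzzyMetric M luk) (hgen : GeneratesTopology M) {t : ℝ}
    (ht : 0 < t) : LowerSemicontinuous fun p : X × X => M p.1 p.2 t := by
  rintro ⟨x₀, y₀⟩ c hc
  obtain ⟨δ, s, hδ, hs, hlt⟩ := hM.exists_forall_fmBall_lt ht hc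
  filter_upwards [prod_mem_nhds (hM.fmBall_mem_nhds hgen x₀ hδ hs)
    (hM.fmBall_mem_nhds hgen y₀ hδ hs)] with p hp
  exact hlt _ hp.1 _ hp.2

lemma exists_pos_le [CompactSpace X] (hM : IsFuzzyMetric M luk) (hgen : GeneratesTopology M)
    {t : ℝ} (ht : 0 < t) : ∃ c, 0 < c ∧ ∀ x y, c ≤ M x y t := by
  cases isEmpty_or_nonempty X
  · exact ⟨1, one_pos, fun x => isEmptyElim x⟩
  obtain ⟨p, -, hp⟩ := ((hM.lowerSemicontinuous hgen ht).lowerSemicontinuousOn univ).exists_isMinOn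
    univ_nonempty isCompact_univ
  exact ⟨_, hM.pos p.1 p.2 t ht, fun x y => hp (mem_univ (x, y))⟩

lemma iInter_fmExpand_eq (hM : IsFuzzyMetric M luk) (hgen : GeneratesTopology M) {C : Set X}
    (hC : IsClosed C) : ⋂ r > 0, fmExpand M C r r = C := by
  refine Subset.antisymm (fun y hy => ?_) (subset_iInter₂ fun r hr => hM.subset_fmExpand C hr hr)
  by_contra hyC
  obtain ⟨r, hr, hrC⟩ := (hM.hasBasis_nhds_fmBall hgen y).mem_iff.mp (hC.isOpen_compl.mem_nhds hyC)
  obtain ⟨x, hxC, hxy⟩ := mem_iUnion₂.mp (mem_iInter₂.mp hy r hr)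
  have hyx : 1 - r < M y x r := (hM.symm x y r hr).symm ▸ hxy
  exact hrC hyx hxC

lemma tendsto_measure_fmExpand [MeasurableSpace X] [OpensMeasurableSpace X]
    (hM : IsFuzzyMetric M luk) (hgen : GeneratesTopology M) (μ : Measure X) [IsFiniteMeasure μ]
    {C : Set X} (hC : IsClosed C) :
    Tendsto (fun r => μ (fmExpand M C r r)) (𝓝[>] 0) (𝓝 (μ C)) := by
  have h := tendsto_measure_biInter_gt (μ := μ) (s := fun r => fmExpand M C r r) (a := 0)
    (fun r hr => ?_) (fun i j hi hij => ?_) ⟨1, one_pos, measure_ne_top μ _⟩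
  · rwa [hM.iInter_fmExpand_eq hgen hC] at h
  · exact (isOpen_biUnion fun x _ => hM.isOpen_fmBall hgen x hr hr).nullMeasurableSet
  · exact fmExpand_mono fun x => hM.fmBall_mono hi hij hij

end IsFuzzyMetric

end FuzzyMetric

section Prokhorov

variable {X : Type*} [MeasurableSpace X] {M : X → X → ℝ → ℝ}

lemma prokSet_nonempty [TopologicalSpace X] [CompactSpace X] (hM : IsFuzzyMetric M luk)
    (hgen : GeneratesTopology M) (μ ν : Measure X) [IsProbabilityMeasure μ]
    [IsProbabilityMeasure ν] {t : ℝ} (ht : 0 < t) : (prokSet M μ ν t).Nonempty := by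
  obtain ⟨c, hc, hcM⟩ := hM.exists_pos_le hgen ht
  set r := 1 - min c 1 / 2 with hr
  have hexpand : ∀ A : Set X, A.Nonempty → fmExpand M A r t = univ := fun A ⟨a, ha⟩ =>
    eq_univ_of_forall fun y => mem_biUnion ha
      (show 1 - r < M a y t by linarith [hcM a y, min_le_left c 1])
  refine ⟨r, by linarith [min_le_right c 1], by linarith [lt_min hc one_pos], fun A _ => ?_⟩
  rcases A.eq_empty_or_nonempty with rfl | hA
  · simp
  · rw [hexpand A hA, measure_univ, measure_univ]
    exact ⟨prob_le_one.trans le_self_add, prob_le_one.trans le_self_add⟩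

lemma measure_le_measure_fmExpand_add_of_lt_fuzzyProkhorov {μ ν : Measure X} {r t : ℝ}
    (hne : (prokSet M μ ν t).Nonempty) (hlt : 1 - r < fuzzyProkhorov M μ ν t) {A : Set X}
    (hA : MeasurableSet A) : μ A ≤ ν (fmExpand M A r t) + ENNReal.ofReal r := by
  have hsInf : sInf (prokSet M μ ν t) < r := by
    unfold fuzzyProkhorov at hlt
    linarith
  obtain ⟨s, ⟨-, -, hs⟩, hsr⟩ := (csInf_lt_iff ⟨0, fun _ h => h.1.le⟩ hne).mp hsInf
  calc μ A ≤ ν (fmExpand M A s t) + ENNReal.ofReal s := (hs A hA).1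
    _ ≤ ν (fmExpand M A r t) + ENNReal.ofReal r := by
      gcongr
      exact fmExpand_mono fun _ => fmBall_mono_radius hsr.le

end Prokhorov

/-- convergence in the fuzzy Prokhorov metric implies weak* convergence. -/
theorem fuzzyProkhorov_tendsto_implies_weakStar {X : Type*} [TopologicalSpace X]
    [CompactSpace X] [MeasurableSpace X] [BorelSpace X]
    (M : X → X → ℝ → ℝ) (hM : IsFuzzyMetric M luk) (hgen : GeneratesTopology M)
    (μs : ℕ → ProbabilityMeasure X) (μ : ProbabilityMeasure X)
    (hconv : ∀ t : ℝ, 0 < t → ∀ r ∈ Ioo (0:ℝ) 1, ∃ N : ℕ, ∀ i ≥ N,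
      1 - r < fuzzyProkhorov M (μs i : Measure X) (μ : Measure X) t) :
    ∀ C : Set X, IsClosed C →
      Filter.limsup (fun i => (μs i : Measure X) C) Filter.atTop ≤
        (μ : Measure X) C := by
  intro C hC
  refine ENNReal.le_of_forall_pos_le_add fun ε hε _ => ?_
  have hε₂ : (0 : ℝ) < (ε : ℝ) / 2 := by positivity
  obtain ⟨r, hμr, hr0, hr⟩ : ∃ r, (μ : Measure X) (fmExpand M C r r) <
      (μ : Measure X) C + ENNReal.ofReal ((ε : ℝ) / 2) ∧ r ∈ Ioo 0 (min 1 ((ε : ℝ) / 2)) :=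
    (((hM.tendsto_measure_fmExpand hgen μ hC).eventually_lt_const
      (ENNReal.lt_add_right (measure_ne_top _ _) (by positivity))).and
      (Ioo_mem_nhdsGT (lt_min one_pos hε₂))).exists
  obtain ⟨N, hN⟩ := hconv r hr0 r ⟨hr0, hr.trans_le (min_le_left _ _)⟩
  refine limsup_le_of_le (by isBoundedDefault) (eventually_atTop.2 ⟨N, fun i hi => ?_⟩)
  calc (μs i : Measure X) C ≤ (μ : Measure X) (fmExpand M C r r) + ENNReal.ofReal r :=
        measure_le_measure_fmExpand_add_of_lt_fuzzyProkhorov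
          (prokSet_nonempty hM hgen _ _ hr0) (hN i hi) hC.measurableSet
    _ ≤ (μ : Measure X) C + ENNReal.ofReal ((ε : ℝ) / 2) + ENNReal.ofReal ((ε : ℝ) / 2) := by
        gcongr
        exact (hr.trans_le (min_le_right _ _)).le
    _ = (μ : Measure X) C + ε := by
        rw [add_assoc, ← ENNReal.ofReal_add hε₂.le hε₂.le, add_halves, ENNReal.ofReal_coe_nnreal]
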